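/- arXiv:0904.0651 — 2 statements merged into one kernel-verified Lean document; each statement's English description precedes it below -/
import Mathlib

section
/- Let k be a field. The quotient algebras kQ/⟨α₁β₁, α₂β₂⟩ and kQ/⟨α₁β₁ − α₂β₁ − α₁β₂, α₂β₂⟩ are isomorphic as k-algebras. -/
/-!
Context: `F = FreeAlgebra k (Fin 7)` is the free `k`-algebra on seven generators
`e₁, e₂, e₃, α₁, α₂, β₁, β₂`.  `J` is the two-sided ideal generated by
`eᵢeⱼ (i ≠ j)`, `eᵢ² - eᵢ`, `e₁ + e₂ + e₃ - 1`, `αᵢ - e₁ αᵢ e₂`, `βᵢ - e₂ βᵢ e₃`,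
and `kQ = F/J` is the path algebra of the quiver
`3 ⇉(β₁,β₂) 2 ⇉(α₁,α₂) 1`.
-/

noncomputable section

variable (k : Type*) [Field k]

/-- The generators of the free algebra `F`: `e₁, e₂, e₃, α₁, α₂, β₁, β₂`. -/
def e1 : FreeAlgebra k (Fin 7) := FreeAlgebra.ι k 0
def e2 : FreeAlgebra k (Fin 7) := FreeAlgebra.ι k 1
def e3 : FreeAlgebra k (Fin 7) := FreeAlgebra.ι k 2
def a1 : FreeAlgebra k (Fin 7) := FreeAlgebra.ι k 3
def a2 : FreeAlgebra k (Fin 7) := FreeAlgebra.ι k 4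
def b1 : FreeAlgebra k (Fin 7) := FreeAlgebra.ι k 5
def b2 : FreeAlgebra k (Fin 7) := FreeAlgebra.ι k 6

/-- The defining relations of the path algebra `kQ`. -/
def rels : Set (FreeAlgebra k (Fin 7)) :=
  {e1 k * e2 k, e2 k * e1 k, e1 k * e3 k, e3 k * e1 k, e2 k * e3 k, e3 k * e2 k,
   e1 k * e1 k - e1 k, e2 k * e2 k - e2 k, e3 k * e3 k - e3 k,
   e1 k + e2 k + e3 k - 1,
   a1 k - e1 k * a1 k * e2 k, a2 k - e1 k * a2 k * e2 k,
   b1 k - e2 k * b1 k * e3 k, b2 k - e2 k * b2 k * e3 k}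

/-- The two-sided ideal `J ⊆ F` of relations. -/
def J : TwoSidedIdeal (FreeAlgebra k (Fin 7)) := TwoSidedIdeal.span (rels k)

/-- The path algebra `kQ := F/J`. -/
abbrev kQ := (J k).ringCon.Quotient

/-- The images `e₁, e₂, e₃, α₁, α₂, β₁, β₂` of the generators in `kQ`. -/
def E1 : kQ k := (J k).ringCon.mk' (e1 k)
def E2 : kQ k := (J k).ringCon.mk' (e2 k)
def E3 : kQ k := (J k).ringCon.mk' (e3 k)
def A1 : kQ k := (J k).ringCon.mk' (a1 k)
def A2 : kQ k := (J k).ringCon.mk' (a2 k)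
def B1 : kQ k := (J k).ringCon.mk' (b1 k)
def B2 : kQ k := (J k).ringCon.mk' (b2 k)

/-!
The change of arrows `α₁ ↦ α₁ - α₂`, `β₁ ↦ β₁ - β₂` (fixing the other generators) respects the
relations of `kQ`, with inverse `α₁ ↦ α₁ + α₂`, `β₁ ↦ β₁ + β₂`, so it is an automorphism of `kQ`.
It fixes `α₂β₂` and sends `α₁β₁` to `(α₁β₁ - α₂β₁ - α₁β₂) + α₂β₂`, hence carries the ideal
`⟨α₁β₁, α₂β₂⟩` onto `⟨α₁β₁ - α₂β₁ - α₁β₂, α₂β₂⟩`.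
-/

namespace TwoSidedIdeal

variable {R A B : Type*} [CommSemiring R] [Ring A] [Ring B] [Algebra R A] [Algebra R B]

lemma span_eq_comap_span (e : A ≃ₐ[R] B) {s : Set A} {t : Set B}
    (hs : Set.MapsTo e s (span t)) (ht : Set.MapsTo e.symm t (span s)) :
    span s = (span t).comap e := by
  refine le_antisymm (span_le.2 fun x hx => (mem_comap e).2 (hs hx)) fun x hx => ?_
  have hle : span t ≤ (span s).comap e.symm := span_le.2 fun y hy => (mem_comap e.symm).2 (ht hy)
  simpa using (mem_comap e.symm).1 (hle ((mem_comap e).1 hx))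

def quotientSpanAlgEquiv (e : A ≃ₐ[R] B) {s : Set A} {t : Set B}
    (hs : Set.MapsTo e s (span t)) (ht : Set.MapsTo e.symm t (span s)) :
    (span s).ringCon.Quotient ≃ₐ[R] (span t).ringCon.Quotient :=
  RingCon.congrₐ R e (congrArg ringCon (span_eq_comap_span e hs ht))

end TwoSidedIdeal

section Shear

variable {k}

def shearGens (c : k) : Fin 7 → FreeAlgebra k (Fin 7) :=
  ![e1 k, e2 k, e3 k, a1 k + c • a2 k, a2 k, b1 k + c • b2 k, b2 k]

lemma lift_shearGens_comp_neg (c : k) :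
    (FreeAlgebra.lift k (shearGens c)).comp (FreeAlgebra.lift k (shearGens (-c))) =
      AlgHom.id k _ := by
  ext i
  fin_cases i <;> simp [shearGens, e1, e2, e3, a1, a2, b1, b2]

def shearFree (c : k) : FreeAlgebra k (Fin 7) ≃ₐ[k] FreeAlgebra k (Fin 7) :=
  AlgEquiv.ofAlgHom (FreeAlgebra.lift k (shearGens c)) (FreeAlgebra.lift k (shearGens (-c)))
    (lift_shearGens_comp_neg c) (by simpa using lift_shearGens_comp_neg (-c))

@[simp] lemma shearFree_e1 (c : k) : shearFree c (e1 k) = e1 k := by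
  simp [shearFree, shearGens, e1]

@[simp] lemma shearFree_e2 (c : k) : shearFree c (e2 k) = e2 k := by
  simp [shearFree, shearGens, e2]

@[simp] lemma shearFree_e3 (c : k) : shearFree c (e3 k) = e3 k := by
  simp [shearFree, shearGens, e3]

@[simp] lemma shearFree_a1 (c : k) : shearFree c (a1 k) = a1 k + c • a2 k := by
  simp [shearFree, shearGens, a1]

@[simp] lemma shearFree_a2 (c : k) : shearFree c (a2 k) = a2 k := by
  simp [shearFree, shearGens, a2]

@[simp] lemma shearFree_b1 (c : k) : shearFree c (b1 k) = b1 k + c • b2 k := by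
  simp [shearFree, shearGens, b1]

@[simp] lemma shearFree_b2 (c : k) : shearFree c (b2 k) = b2 k := by
  simp [shearFree, shearGens, b2]

@[simp] lemma shearFree_symm (c : k) : (shearFree c).symm = shearFree (-c) := by
  ext x
  simp [shearFree, shearGens]

lemma mapsTo_shearFree_rels (c : k) : Set.MapsTo (shearFree c) (rels k) (J k) := by
  have mem {r} (hr : r ∈ rels k) : r ∈ J k := TwoSidedIdeal.subset_span hr
  have smul_mem {x} (hx : x ∈ J k) : c • x ∈ J k := by
    rw [Algebra.smul_def]
    exact (J k).mul_mem_left _ _ hx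
  have sandwich (x y p q : FreeAlgebra k (Fin 7)) :
      x + c • y - p * (x + c • y) * q = (x - p * x * q) + c • (y - p * y * q) := by
    simp only [mul_add, add_mul, mul_smul_comm, smul_mul_assoc, smul_sub]
    abel
  intro r hr
  simp only [rels, Set.mem_insert_iff, Set.mem_singleton_iff] at hr
  rcases hr with rfl | rfl | rfl | rfl | rfl | rfl | rfl | rfl | rfl | rfl | rfl | rfl | rfl | rfl <;>
    simp only [map_mul, map_sub, map_add, map_one, shearFree_e1, shearFree_e2, shearFree_e3,
      shearFree_a1, shearFree_a2, shearFree_b1, shearFree_b2, sandwich]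
  all_goals first
    | refine (J k).add_mem (mem ?_) (smul_mem (mem ?_))
    | refine mem ?_
  all_goals simp only [rels, Set.mem_insert_iff, Set.mem_singleton_iff, true_or, or_true]

def shear (c : k) : kQ k ≃ₐ[k] kQ k :=
  TwoSidedIdeal.quotientSpanAlgEquiv (shearFree c) (mapsTo_shearFree_rels c)
    fun _ hy => shearFree_symm c ▸ mapsTo_shearFree_rels (-c) hy

lemma shear_mk (c : k) (x : FreeAlgebra k (Fin 7)) :
    shear c ((J k).ringCon.mk' x) = (J k).ringCon.mk' (shearFree c x) := rfl

@[simp] lemma shear_A1 (c : k) : shear c (A1 k) = A1 k + c • A2 k := by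
  rw [A1, A2, shear_mk, shearFree_a1, map_add]
  rfl

@[simp] lemma shear_A2 (c : k) : shear c (A2 k) = A2 k := by
  rw [A2, shear_mk, shearFree_a2]

@[simp] lemma shear_B1 (c : k) : shear c (B1 k) = B1 k + c • B2 k := by
  rw [B1, B2, shear_mk, shearFree_b1, map_add]
  rfl

@[simp] lemma shear_B2 (c : k) : shear c (B2 k) = B2 k := by
  rw [B2, shear_mk, shearFree_b2]

@[simp] lemma shear_symm (c : k) : (shear c).symm = shear (-c) := by
  ext x
  obtain ⟨y, rfl⟩ := (J k).ringCon.mk'_surjective x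
  rw [AlgEquiv.symm_apply_eq, shear_mk, shear_mk, ← shearFree_symm, AlgEquiv.apply_symm_apply]

end Shear

/-- `kQ/⟨α₁β₁, α₂β₂⟩` and `kQ/⟨α₁β₁ - α₂β₁ - α₁β₂, α₂β₂⟩` are isomorphic `k`-algebras. -/
theorem kQ_quotient_iso_I3 :
    Nonempty
      ((TwoSidedIdeal.span {A1 k * B1 k, A2 k * B2 k} :
          TwoSidedIdeal (kQ k)).ringCon.Quotient ≃ₐ[k]
        (TwoSidedIdeal.span {A1 k * B1 k - A2 k * B1 k - A1 k * B2 k, A2 k * B2 k} :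
          TwoSidedIdeal (kQ k)).ringCon.Quotient) := by
  open TwoSidedIdeal in
  refine ⟨quotientSpanAlgEquiv (shear (-1 : k)) ?_ ?_⟩
  · rintro x (rfl | rfl)
    · have h : shear (-1 : k) (A1 k * B1 k) =
          (A1 k * B1 k - A2 k * B1 k - A1 k * B2 k) + A2 k * B2 k := by
        simp only [map_mul, shear_A1, shear_B1, neg_one_smul]
        noncomm_ring
      rw [h]
      exact add_mem (subset_span (by simp)) (subset_span (by simp))
    · rw [map_mul, shear_A2, shear_B2]
      exact subset_span (by simp)
  · rintro y (rfl | rfl) <;> rw [shear_symm, neg_neg]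
    · have h : shear (1 : k) (A1 k * B1 k - A2 k * B1 k - A1 k * B2 k) =
          A1 k * B1 k - A2 k * B2 k := by
        simp only [map_sub, map_mul, shear_A1, shear_A2, shear_B1, shear_B2, one_smul]
        noncomm_ring
      rw [h]
      exact sub_mem (subset_span (by simp)) (subset_span (by simp))
    · rw [map_mul, shear_A2, shear_B2]
      exact subset_span (by simp)
end
end

section
/- Let k be a field of characteristic different from 2. There exists a k-algebra automorphism φ of kQ with φ(α₁) = (1/2)(α₁ − α₂), φ(α₂) = (1/2)(α₁ + α₂), φ(β₁) = (1/2)(β₁ − β₂), φ(β₂) = β₁ + β₂, and φ(e_i) = e_i for i = 1, 2, 3; moreover φ maps the two-sided ideal ⟨α₁β₁, α₂β₂⟩ of kQ onto the two-sided ideal ⟨α₁β₁ + α₂β₂, α₂β₁ + α₁β₂⟩. -/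
/-!
Context: `F = FreeAlgebra k (Fin 7)` is the free `k`-algebra on seven generators
`e₁, e₂, e₃, α₁, α₂, β₁, β₂`.  `J` is the two-sided ideal generated by
`eᵢeⱼ (i ≠ j)`, `eᵢ² - eᵢ`, `e₁ + e₂ + e₃ - 1`, `αᵢ - e₁ αᵢ e₂`, `βᵢ - e₂ βᵢ e₃`,
and `kQ = F/J` is the path algebra of the quiver
`3 ⇉(β₁,β₂) 2 ⇉(α₁,α₂) 1`.
-/

noncomputable section

variable (k : Type*) [Field k]

/-!
The substitution `φ` fixes the vertex idempotents and acts by invertible linear maps on the spans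
of `α₁, α₂ ∈ e₁ kQ e₂` and of `β₁, β₂ ∈ e₂ kQ e₃` (determinants `1/2` and `1`). Hence it respects
the relations of `kQ`, and the substitution by the inverse matrices is its inverse. Expanding,
`φ(α₁β₁) = (s - t)/4` and `φ(α₂β₂) = (s + t)/2` for `s = α₁β₁ + α₂β₂`, `t = α₂β₁ + α₁β₂`, and since
`2` is invertible these span the same ideal as `s` and `t`.
-/

open TwoSidedIdeal

theorem TwoSidedIdeal.algebra_smul_mem {k A : Type*} [CommRing k] [Ring A] [Algebra k A]
    (I : TwoSidedIdeal A) (c : k) {x : A} (hx : x ∈ I) : c • x ∈ I := by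
  rw [Algebra.smul_def]
  exact I.mul_mem_left _ _ hx

theorem TwoSidedIdeal.image_span_eq_span_image {R S : Type*} [Ring R] [Ring S] (e : R ≃+* S)
    (s : Set R) : e '' (span s : Set R) = span (e '' s) := by
  have h : span (e '' s) = comap e.symm (span s) := by
    refine le_antisymm (span_le.2 ?_) fun x hx => ?_
    · rintro _ ⟨x, hx, rfl⟩
      simpa [mem_comap] using subset_span hx
    · have hs : span s ≤ comap e (span (e '' s)) :=
        span_le.2 fun y hy => (mem_comap e).2 (subset_span ⟨y, hy, rfl⟩)
      simpa [mem_comap] using hs ((mem_comap e.symm).1 hx)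
  ext y
  rw [h, SetLike.mem_coe, mem_comap]
  exact ⟨by rintro ⟨x, hx, rfl⟩; simpa using hx, fun hy => ⟨e.symm y, hy, e.apply_symm_apply y⟩⟩

theorem TwoSidedIdeal.span_pair_eq_span_pair {R : Type*} [Ring R] {a b c d : R}
    (ha : a ∈ span {c, d}) (hb : b ∈ span {c, d}) (hc : c ∈ span {a, b})
    (hd : d ∈ span {a, b}) : span {a, b} = span {c, d} :=
  le_antisymm (span_le.2 (Set.pair_subset ha hb)) (span_le.2 (Set.pair_subset hc hd))

/-- For idempotents `p`, `q` this is the corner `p A q`. -/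
def cornerSubmodule (k : Type*) {A : Type*} [CommRing k] [Ring A] [Algebra k A] (p q : A) :
    Submodule k A :=
  LinearMap.eqLocus (LinearMap.mulLeftRight k (p, q)) LinearMap.id

theorem mem_cornerSubmodule {k A : Type*} [CommRing k] [Ring A] [Algebra k A] {p q x : A} :
    x ∈ cornerSubmodule k p q ↔ p * x * q = x :=
  Iff.rfl

namespace kQ

variable {k}

theorem mk_eq_zero_of_mem_rels {r : FreeAlgebra k (Fin 7)} (hr : r ∈ rels k) :
    (J k).ringCon.mk' r = 0 := by
  rw [← mem_ker, ker_ringCon_mk']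
  exact subset_span hr

theorem ringCon_le_ker {B : Type*} [Ring B] [Algebra k B] {f : FreeAlgebra k (Fin 7) →ₐ[k] B}
    (hf : ∀ r ∈ rels k, f r = 0) : (J k).ringCon ≤ RingCon.ker f.toRingHom := by
  have hJ : J k ≤ TwoSidedIdeal.ker f := span_le.2 fun r hr => (mem_ker f).2 (hf r hr)
  exact fun x y hxy => (RingCon.ker_apply _).2 ((ker_ringCon f).1 (ringCon_le_iff.1 hJ hxy))

def lift {B : Type*} [Ring B] [Algebra k B] (f : FreeAlgebra k (Fin 7) →ₐ[k] B)
    (hf : ∀ r ∈ rels k, f r = 0) : kQ k →ₐ[k] B :=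
  (J k).ringCon.liftₐ f (ringCon_le_ker hf)

theorem algHom_ext {B : Type*} [Ring B] [Algebra k B] {f g : kQ k →ₐ[k] B}
    (he₁ : f (E1 k) = g (E1 k)) (he₂ : f (E2 k) = g (E2 k)) (he₃ : f (E3 k) = g (E3 k))
    (hα₁ : f (A1 k) = g (A1 k)) (hα₂ : f (A2 k) = g (A2 k))
    (hβ₁ : f (B1 k) = g (B1 k)) (hβ₂ : f (B2 k) = g (B2 k)) : f = g := by
  refine RingCon.Quotient.hom_extₐ (FreeAlgebra.hom_ext (funext fun i => ?_))
  fin_cases i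
  exacts [he₁, he₂, he₃, hα₁, hα₂, hβ₁, hβ₂]

theorem mk_mem_cornerSubmodule {x p q : FreeAlgebra k (Fin 7)} (h : x - p * x * q ∈ rels k) :
    (J k).ringCon.mk' x ∈ cornerSubmodule k ((J k).ringCon.mk' p) ((J k).ringCon.mk' q) := by
  have h0 := mk_eq_zero_of_mem_rels h
  rw [map_sub, map_mul, map_mul, sub_eq_zero] at h0
  exact h0.symm

def α₁ : cornerSubmodule k (E1 k) (E2 k) := ⟨A1 k, mk_mem_cornerSubmodule (by simp [rels])⟩
def α₂ : cornerSubmodule k (E1 k) (E2 k) := ⟨A2 k, mk_mem_cornerSubmodule (by simp [rels])⟩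
def β₁ : cornerSubmodule k (E2 k) (E3 k) := ⟨B1 k, mk_mem_cornerSubmodule (by simp [rels])⟩
def β₂ : cornerSubmodule k (E2 k) (E3 k) := ⟨B2 k, mk_mem_cornerSubmodule (by simp [rels])⟩

section substArrows

variable (x₁ x₂ : cornerSubmodule k (E1 k) (E2 k)) (y₁ y₂ : cornerSubmodule k (E2 k) (E3 k))

def substArrows : kQ k →ₐ[k] kQ k :=
  lift (FreeAlgebra.lift k ![E1 k, E2 k, E3 k, x₁, x₂, y₁, y₂]) (by
    intro r hr
    have h0 := mk_eq_zero_of_mem_rels hr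
    have hx₁ := mem_cornerSubmodule.1 x₁.2
    have hx₂ := mem_cornerSubmodule.1 x₂.2
    have hy₁ := mem_cornerSubmodule.1 y₁.2
    have hy₂ := mem_cornerSubmodule.1 y₂.2
    simp only [rels, Set.mem_insert_iff, Set.mem_singleton_iff] at hr
    rcases hr with rfl | rfl | rfl | rfl | rfl | rfl | rfl | rfl | rfl | rfl | rfl | rfl | rfl | rfl <;>
      simp_all [E1, E2, E3, e1, e2, e3, a1, a2, b1, b2])

@[simp] theorem substArrows_E1 : substArrows x₁ x₂ y₁ y₂ (E1 k) = E1 k :=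
  FreeAlgebra.lift_ι_apply _ _
@[simp] theorem substArrows_E2 : substArrows x₁ x₂ y₁ y₂ (E2 k) = E2 k :=
  FreeAlgebra.lift_ι_apply _ _
@[simp] theorem substArrows_E3 : substArrows x₁ x₂ y₁ y₂ (E3 k) = E3 k :=
  FreeAlgebra.lift_ι_apply _ _
@[simp] theorem substArrows_A1 : substArrows x₁ x₂ y₁ y₂ (A1 k) = x₁ :=
  FreeAlgebra.lift_ι_apply _ _
@[simp] theorem substArrows_A2 : substArrows x₁ x₂ y₁ y₂ (A2 k) = x₂ :=
  FreeAlgebra.lift_ι_apply _ _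
@[simp] theorem substArrows_B1 : substArrows x₁ x₂ y₁ y₂ (B1 k) = y₁ :=
  FreeAlgebra.lift_ι_apply _ _
@[simp] theorem substArrows_B2 : substArrows x₁ x₂ y₁ y₂ (B2 k) = y₂ :=
  FreeAlgebra.lift_ι_apply _ _

end substArrows

def phi : kQ k →ₐ[k] kQ k :=
  substArrows ((2 : k)⁻¹ • (α₁ - α₂)) ((2 : k)⁻¹ • (α₁ + α₂)) ((2 : k)⁻¹ • (β₁ - β₂)) (β₁ + β₂)

def phiInv : kQ k →ₐ[k] kQ k :=
  substArrows (α₁ + α₂) (α₂ - α₁) (β₁ + (2 : k)⁻¹ • β₂) ((2 : k)⁻¹ • β₂ - β₁)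

theorem phi_comp_phiInv (h2 : (2 : k) ≠ 0) : phi.comp phiInv = AlgHom.id k (kQ k) := by
  refine algHom_ext ?_ ?_ ?_ ?_ ?_ ?_ ?_ <;> simp [phi, phiInv, α₁, α₂, β₁, β₂] <;> match_scalars
    <;> field_simp <;> ring

theorem phiInv_comp_phi (h2 : (2 : k) ≠ 0) : phiInv.comp phi = AlgHom.id k (kQ k) := by
  refine algHom_ext ?_ ?_ ?_ ?_ ?_ ?_ ?_ <;> simp [phi, phiInv, α₁, α₂, β₁, β₂] <;> match_scalars
    <;> field_simp <;> ring

theorem phi_A1_mul_B1 : phi (A1 k * B1 k) =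
    ((2 : k)⁻¹ * (2 : k)⁻¹) • ((A1 k * B1 k + A2 k * B2 k) - (A2 k * B1 k + A1 k * B2 k)) := by
  simp only [phi, map_mul, substArrows_A1, substArrows_B1, Submodule.coe_smul, Submodule.coe_sub,
    α₁, α₂, β₁, β₂, smul_mul_smul_comm, mul_sub, sub_mul]
  module

theorem phi_A2_mul_B2 : phi (A2 k * B2 k) =
    (2 : k)⁻¹ • ((A1 k * B1 k + A2 k * B2 k) + (A2 k * B1 k + A1 k * B2 k)) := by
  simp only [phi, map_mul, substArrows_A2, substArrows_B2, Submodule.coe_smul, Submodule.coe_add,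
    α₁, α₂, β₁, β₂, smul_mul_assoc, mul_add, add_mul]
  module

theorem span_phi_A1_mul_B1_A2_mul_B2 (h2 : (2 : k) ≠ 0) :
    span {phi (A1 k * B1 k), phi (A2 k * B2 k)} =
      span {A1 k * B1 k + A2 k * B2 k, A2 k * B1 k + A1 k * B2 k} := by
  set s := A1 k * B1 k + A2 k * B2 k
  set t := A2 k * B1 k + A1 k * B2 k
  have hs : s = (2 : k) • phi (A1 k * B1 k) + phi (A2 k * B2 k) := by
    rw [phi_A1_mul_B1, phi_A2_mul_B2]
    match_scalars <;> field_simp <;> ring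
  have ht : t = phi (A2 k * B2 k) - (2 : k) • phi (A1 k * B1 k) := by
    rw [phi_A1_mul_B1, phi_A2_mul_B2]
    match_scalars <;> field_simp <;> ring
  have hs_mem : s ∈ span {s, t} := subset_span (Set.mem_insert _ _)
  have ht_mem : t ∈ span {s, t} := subset_span (Set.mem_insert_of_mem _ rfl)
  have ha_mem : phi (A1 k * B1 k) ∈ span {phi (A1 k * B1 k), phi (A2 k * B2 k)} :=
    subset_span (Set.mem_insert _ _)
  have hb_mem : phi (A2 k * B2 k) ∈ span {phi (A1 k * B1 k), phi (A2 k * B2 k)} :=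
    subset_span (Set.mem_insert_of_mem _ rfl)
  refine span_pair_eq_span_pair ?_ ?_ ?_ ?_
  · rw [phi_A1_mul_B1]
    exact algebra_smul_mem _ _ (sub_mem hs_mem ht_mem)
  · rw [phi_A2_mul_B2]
    exact algebra_smul_mem _ _ (add_mem hs_mem ht_mem)
  · rw [hs]
    exact add_mem (algebra_smul_mem _ _ ha_mem) hb_mem
  · rw [ht]
    exact sub_mem hb_mem (algebra_smul_mem _ _ ha_mem)

end kQ

/-- If `char k ≠ 2`, there is a `k`-algebra automorphism `φ` of `kQ` with
`φ(α₁) = ½(α₁ - α₂)`, `φ(α₂) = ½(α₁ + α₂)`, `φ(β₁) = ½(β₁ - β₂)`, `φ(β₂) = β₁ + β₂`,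
`φ(eᵢ) = eᵢ`, mapping `⟨α₁β₁, α₂β₂⟩` onto `⟨α₁β₁ + α₂β₂, α₂β₁ + α₁β₂⟩`. -/
theorem exists_automorphism_mapping_I_to_I4 (hchar : (2 : k) ≠ 0) :
    ∃ φ : kQ k ≃ₐ[k] kQ k,
      φ (A1 k) = (2 : k)⁻¹ • (A1 k - A2 k) ∧
      φ (A2 k) = (2 : k)⁻¹ • (A1 k + A2 k) ∧
      φ (B1 k) = (2 : k)⁻¹ • (B1 k - B2 k) ∧
      φ (B2 k) = B1 k + B2 k ∧
      φ (E1 k) = E1 k ∧ φ (E2 k) = E2 k ∧ φ (E3 k) = E3 k ∧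
      φ '' (TwoSidedIdeal.span {A1 k * B1 k, A2 k * B2 k} : Set (kQ k)) =
        (TwoSidedIdeal.span {A1 k * B1 k + A2 k * B2 k, A2 k * B1 k + A1 k * B2 k} :
          Set (kQ k)) := by
  let φ : kQ k ≃ₐ[k] kQ k :=
    AlgEquiv.ofAlgHom kQ.phi kQ.phiInv (kQ.phi_comp_phiInv hchar) (kQ.phiInv_comp_phi hchar)
  refine ⟨φ, kQ.substArrows_A1 .., kQ.substArrows_A2 .., kQ.substArrows_B1 ..,
    kQ.substArrows_B2 .., kQ.substArrows_E1 .., kQ.substArrows_E2 .., kQ.substArrows_E3 .., ?_⟩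
  rw [← AlgEquiv.coe_ringEquiv, image_span_eq_span_image, Set.image_pair]
  exact congrArg _ (kQ.span_phi_A1_mul_B1_A2_mul_B2 hchar)
end
end
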